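/- Let 𝒞 be a C*-algebra, let 𝒜 and ℬ be finite-dimensional *-subalgebras of 𝒞, and let Ω be a nonempty locally compact Hausdorff space. Then d₀(𝒜, ℬ) = d₀(C₀(Ω, 𝒜), C₀(Ω, ℬ)), where C₀(Ω, 𝒜) and C₀(Ω, ℬ) are viewed as C*-subalgebras of C₀(Ω, 𝒞). -/

import Mathlib

/-!
Evaluating at a point turns a near-inclusion `C₀(Ω, 𝒜) ⊆_γ C₀(Ω, ℬ)` into `𝒜 ⊆_γ ℬ`: test it on
`t ↦ φ t • x` with `φ` an Urysohn bump equal to `1` at that point.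

Conversely, a pointwise choice of approximants in `ℬ` need not be continuous, so it is averaged.
The unit sphere of the finite-dimensional `𝒜` is compact, hence covered by finitely many `ε`-balls
around points `sᵢ` with approximants `yᵢ ∈ ℬ`, `‖sᵢ - yᵢ‖ ≤ γ`. Averaging the `‖x‖ • yᵢ` with
continuous weights supported on the cones over these balls gives a map `G`, continuous on `𝒜`, with
`‖x - G x‖ ≤ (γ + ε) ‖x‖`, since the closed ball is convex. Then `f ↦ G ∘ f` shows
`C₀(Ω, 𝒜) ⊆_{γ+ε} C₀(Ω, ℬ)`, and `ε` is arbitrary.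
-/

open Metric
open scoped ZeroAtInfty

/-- `A ⊆_γ B`: every element of the closed unit ball of `A` is within distance `γ` of `B`. -/
def nearIncl {X : Type*} [NormedAddCommGroup X] (A B : Set X) (γ : ℝ) : Prop :=
  ∀ x ∈ A ∩ closedBall (0 : X) 1, ∃ y ∈ B, ‖x - y‖ ≤ γ

/-- The Christensen distance `d₀`. -/
noncomputable def d0 {X : Type*} [NormedAddCommGroup X] (A B : Set X) : ℝ :=
  sInf {γ : ℝ | 0 < γ ∧ nearIncl A B γ ∧ nearIncl B A γ}

/-- `C₀(Ω, 𝒜)` viewed as a subset of `C₀(Ω, 𝒞)`: the continuous functions vanishing at infinity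
with values in `𝒜`. -/
def c0ValIn {Ω C : Type*} [TopologicalSpace Ω] [NormedAddCommGroup C]
    (A : Set C) : Set C₀(Ω, C) :=
  {f | ∀ t, f t ∈ A}

open Filter Topology Set

namespace ZeroAtInftyContinuousMap

variable {Ω E : Type*} [TopologicalSpace Ω] [NormedAddCommGroup E]

theorem norm_coe_le_norm (f : C₀(Ω, E)) (t : Ω) : ‖f t‖ ≤ ‖f‖ :=
  f.toBCF.norm_coe_le_norm t

theorem norm_le {f : C₀(Ω, E)} {M : ℝ} (hM : 0 ≤ M) : ‖f‖ ≤ M ↔ ∀ t, ‖f t‖ ≤ M :=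
  BoundedContinuousFunction.norm_le (f := f.toBCF) hM

end ZeroAtInftyContinuousMap

theorem Real.sInf_eq_of_subset_of_forall_add_mem {S T : Set ℝ} (hS : BddBelow S) (hTS : T ⊆ S)
    (hST : ∀ γ ∈ S, ∀ ε > 0, γ + ε ∈ T) : sInf T = sInf S := by
  rcases S.eq_empty_or_nonempty with rfl | ⟨γ, hγ⟩
  · rw [subset_empty_iff.mp hTS]
  refine le_antisymm (le_csInf ⟨γ, hγ⟩ fun δ hδ ↦ le_of_forall_pos_le_add fun ε hε ↦ ?_)
    (csInf_le_csInf hS ⟨γ + 1, hST γ hγ 1 one_pos⟩ hTS)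
  exact csInf_le (hS.mono hTS) (hST δ hδ ε hε)

theorem nearIncl.nonneg {X : Type*} [NormedAddCommGroup X] {A B : Set X} {γ : ℝ}
    (h : nearIncl A B γ) (hA : (0 : X) ∈ A) : 0 ≤ γ :=
  let ⟨_, _, hy⟩ := h 0 ⟨hA, mem_closedBall_self zero_le_one⟩
  (norm_nonneg _).trans hy

section ConeApprox

variable {E : Type*} [NormedAddCommGroup E] [NormedSpace ℝ E] {ε γ : ℝ} {s x : E}

/-- Positive exactly on the open cone of vectors `x` whose direction is `ε`-close to `s`. -/
noncomputable def coneWeight (ε : ℝ) (s x : E) : ℝ :=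
  max (ε * ‖x‖ - ‖x - ‖x‖ • s‖) 0

theorem coneWeight_nonneg : 0 ≤ coneWeight ε s x :=
  le_max_right _ _

theorem continuous_coneWeight : Continuous (coneWeight ε s) := by
  unfold coneWeight
  fun_prop

theorem norm_sub_norm_smul_lt_of_coneWeight_pos (h : 0 < coneWeight ε s x) :
    ‖x - ‖x‖ • s‖ < ε * ‖x‖ := by
  simpa [coneWeight] using h

theorem coneWeight_pos (hx : x ≠ 0) (hs : ‖‖x‖⁻¹ • x - s‖ < ε) : 0 < coneWeight ε s x := by
  have hx' : 0 < ‖x‖ := norm_pos_iff.mpr hx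
  have : ‖x - ‖x‖ • s‖ = ‖x‖ * ‖‖x‖⁻¹ • x - s‖ := by
    rw [← norm_smul_of_nonneg (norm_nonneg x), smul_sub, smul_inv_smul₀ hx'.ne']
  rw [coneWeight, lt_max_iff, sub_pos, this, mul_comm ε]
  exact Or.inl (mul_lt_mul_of_pos_left hs hx')

noncomputable def coneApprox {ι : Type*} (ε : ℝ) (t : Finset ι) (s y : ι → E) (x : E) : E :=
  t.centerMass (fun i ↦ coneWeight ε (s i) x) (fun i ↦ ‖x‖ • y i)

variable {ι : Type*} {t : Finset ι} {s y : ι → E}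

theorem coneApprox_zero : coneApprox ε t s y 0 = 0 := by
  simp [coneApprox, Finset.centerMass]

theorem coneApprox_mem {B : Submodule ℝ E} (hy : ∀ i ∈ t, y i ∈ B) :
    coneApprox ε t s y x ∈ B :=
  B.smul_mem _ (B.sum_mem fun i hi ↦ B.smul_mem _ (B.smul_mem _ (hy i hi)))

theorem norm_sub_coneApprox_le (hy : ∀ i ∈ t, ‖s i - y i‖ ≤ γ)
    (hx : ∃ i ∈ t, 0 < coneWeight ε (s i) x) :
    ‖x - coneApprox ε t s y x‖ ≤ (γ + ε) * ‖x‖ := by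
  classical
  rw [← dist_eq_norm, ← mem_closedBall', coneApprox, ← Finset.centerMass_filter_ne_zero]
  obtain ⟨j, hj, hj_pos⟩ := hx
  refine (convex_closedBall x _).centerMass_mem (fun i _ ↦ coneWeight_nonneg)
    (Finset.sum_pos' (fun i _ ↦ coneWeight_nonneg) ⟨j, by simp [hj, hj_pos.ne'], hj_pos⟩)
    fun i hi ↦ ?_
  obtain ⟨hi, hw⟩ := Finset.mem_filter.mp hi
  have hcone := norm_sub_norm_smul_lt_of_coneWeight_pos (coneWeight_nonneg.lt_of_ne' hw)
  rw [mem_closedBall', dist_eq_norm]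
  calc ‖x - ‖x‖ • y i‖ ≤ ‖x - ‖x‖ • s i‖ + ‖‖x‖ • s i - ‖x‖ • y i‖ :=
        norm_sub_le_norm_sub_add_norm_sub _ _ _
    _ ≤ ε * ‖x‖ + ‖x‖ * γ := by
      rw [← smul_sub, norm_smul, norm_norm]
      exact add_le_add hcone.le (mul_le_mul_of_nonneg_left (hy i hi) (norm_nonneg _))
    _ = (γ + ε) * ‖x‖ := by ring

theorem continuousAt_coneApprox (hx : ∃ i ∈ t, 0 < coneWeight ε (s i) x) :
    ContinuousAt (coneApprox ε t s y) x := by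
  obtain ⟨j, hj, hj_pos⟩ := hx
  have hsum : ∑ i ∈ t, coneWeight ε (s i) x ≠ 0 :=
    (Finset.sum_pos' (fun i _ ↦ coneWeight_nonneg) ⟨j, hj, hj_pos⟩).ne'
  have hw : ∀ i, Continuous (coneWeight ε (s i)) := fun i ↦ continuous_coneWeight
  unfold coneApprox Finset.centerMass
  exact ((continuous_finsetSum _ fun i _ ↦ hw i).continuousAt.inv₀ hsum).smul
    (continuous_finsetSum _ fun i _ ↦
      (hw i).smul (continuous_norm.smul continuous_const)).continuousAt

end ConeApprox

theorem continuousWithinAt_zero_of_norm_sub_le {E : Type*} [NormedAddCommGroup E] {S : Set E}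
    {G : E → E} {c : ℝ} (h0 : G 0 = 0) (hG : ∀ x ∈ S, ‖x - G x‖ ≤ c * ‖x‖) :
    ContinuousWithinAt G S 0 := by
  have hsub : Tendsto (fun x ↦ x - G x) (𝓝[S] 0) (𝓝 0) := by
    refine squeeze_zero_norm' (eventually_nhdsWithin_of_forall hG) ?_
    simpa using ((continuous_norm.tendsto' (0 : E) 0 norm_zero).mono_left
      nhdsWithin_le_nhds).const_mul c
  simpa [ContinuousWithinAt, h0] using (tendsto_nhdsWithin_of_tendsto_nhds tendsto_id).sub hsub

theorem exists_continuousOn_approx_of_nearIncl {E : Type*} [NormedAddCommGroup E]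
    [NormedSpace ℝ E] {A B : Submodule ℝ E} [FiniteDimensional ℝ A] {γ ε : ℝ}
    (h : nearIncl (A : Set E) B γ) (hε : 0 < ε) :
    ∃ G : E → E, ContinuousOn G A ∧ (∀ x, G x ∈ B) ∧ ∀ x ∈ A, ‖x - G x‖ ≤ (γ + ε) * ‖x‖ := by
  obtain ⟨t, ht, hcover⟩ := (isCompact_sphere (0 : A) 1).elim_nhds_subcover (ball · ε)
    fun s _ ↦ ball_mem_nhds s hε
  have hnear : ∀ s ∈ t, ∃ y ∈ B, ‖(s : E) - y‖ ≤ γ := fun s hs ↦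
    h s ⟨s.2, by simpa using (mem_sphere_zero_iff_norm.mp (ht s hs)).le⟩
  choose! y hyB hy using hnear
  have hcone : ∀ x ∈ A, x ≠ 0 → ∃ s ∈ t, 0 < coneWeight ε (s : E) x := by
    intro x hxA hx
    have hu : ‖x‖⁻¹ • (⟨x, hxA⟩ : A) ∈ sphere (0 : A) 1 := by
      simp [norm_smul, hx]
    obtain ⟨s, hs, hus⟩ := mem_iUnion₂.mp (hcover hu)
    exact ⟨s, hs, coneWeight_pos hx (by simpa [dist_eq_norm] using hus)⟩
  have hG : ∀ x ∈ A, ‖x - coneApprox ε t (↑) y x‖ ≤ (γ + ε) * ‖x‖ := by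
    intro x hxA
    rcases eq_or_ne x 0 with rfl | hx
    · simp [coneApprox_zero]
    · exact norm_sub_coneApprox_le hy (hcone x hxA hx)
  refine ⟨coneApprox ε t (↑) y, fun x hxA ↦ ?_, fun _ ↦ coneApprox_mem hyB, hG⟩
  rcases eq_or_ne x 0 with rfl | hx
  · exact continuousWithinAt_zero_of_norm_sub_le coneApprox_zero hG
  · exact (continuousAt_coneApprox (hcone x hxA hx)).continuousWithinAt

section C0

variable {Ω E : Type*} [TopologicalSpace Ω] [NormedAddCommGroup E] [NormedSpace ℝ E]

theorem nearIncl_c0ValIn_of_nearIncl {A B : Submodule ℝ E} [FiniteDimensional ℝ A] {γ ε : ℝ}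
    (h : nearIncl (A : Set E) B γ) (hε : 0 < ε) :
    nearIncl (c0ValIn (Ω := Ω) (A : Set E)) (c0ValIn (B : Set E)) (γ + ε) := by
  obtain ⟨G, hGc, hGB, hG⟩ := exists_continuousOn_approx_of_nearIncl h hε
  rintro f ⟨hfA, hf⟩
  have hsub : Tendsto (fun t ↦ f t - G (f t)) (cocompact Ω) (𝓝 0) :=
    squeeze_zero_norm (fun t ↦ hG _ (hfA t)) (by
      simpa using (tendsto_zero_iff_norm_tendsto_zero.mp f.zero_at_infty').const_mul (γ + ε))
  let g : C₀(Ω, E) :=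
    ⟨⟨fun t ↦ G (f t), hGc.comp_continuous f.continuous hfA⟩,
      by simpa using f.zero_at_infty'.sub hsub⟩
  have hγε : 0 ≤ γ + ε := by linarith [h.nonneg A.zero_mem]
  refine ⟨g, fun t ↦ hGB _, (ZeroAtInftyContinuousMap.norm_le hγε).mpr fun t ↦ ?_⟩
  refine (hG _ (hfA t)).trans (mul_le_of_le_one_right hγε ?_)
  exact (f.norm_coe_le_norm t).trans (mem_closedBall_zero_iff.mp hf)

theorem ZeroAtInftyContinuousMap.exists_smul_eq [LocallyCompactSpace Ω] [T2Space Ω] (t₀ : Ω)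
    (x : E) : ∃ f : C₀(Ω, E), f t₀ = x ∧ ‖f‖ ≤ ‖x‖ ∧ ∀ t, ∃ c : ℝ, f t = c • x := by
  obtain ⟨φ, hφ₁, -, hφc, hφ⟩ :=
    exists_continuous_one_zero_of_isCompact (isCompact_singleton (x := t₀)) isClosed_empty
      (disjoint_empty _)
  refine ⟨⟨⟨fun t ↦ φ t • x, by fun_prop⟩, (hφc.smul_right (f' := fun _ ↦ x)).is_zero_at_infty⟩,
    by simp [hφ₁ rfl], (norm_le (norm_nonneg x)).mpr fun t ↦ ?_, fun t ↦ ⟨φ t, rfl⟩⟩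
  simpa [norm_smul, abs_of_nonneg (hφ t).1] using
    mul_le_of_le_one_left (norm_nonneg x) (hφ t).2

theorem nearIncl_of_nearIncl_c0ValIn [LocallyCompactSpace Ω] [T2Space Ω] [Nonempty Ω]
    {A : Submodule ℝ E} {B : Set E} {γ : ℝ}
    (h : nearIncl (c0ValIn (Ω := Ω) (A : Set E)) (c0ValIn B) γ) : nearIncl (A : Set E) B γ := by
  rintro x ⟨hxA, hx⟩
  obtain ⟨t₀⟩ := ‹Nonempty Ω›
  obtain ⟨f, hft₀, hf, hfA⟩ := ZeroAtInftyContinuousMap.exists_smul_eq t₀ x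
  obtain ⟨g, hgB, hfg⟩ := h f ⟨fun t ↦ by obtain ⟨c, hc⟩ := hfA t; exact hc ▸ A.smul_mem c hxA,
    mem_closedBall_zero_iff.mpr (hf.trans (mem_closedBall_zero_iff.mp hx))⟩
  refine ⟨g t₀, hgB t₀, ?_⟩
  simpa [hft₀] using ((f - g).norm_coe_le_norm t₀).trans hfg

end C0

theorem d0_eq_d0_c0_of_finiteDimensional_general
    {C : Type*} [NonUnitalNormedRing C] [StarRing C] [NormedSpace ℂ C]
    (Ω : Type*) [TopologicalSpace Ω] [LocallyCompactSpace Ω] [T2Space Ω] [Nonempty Ω]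
    (A B : NonUnitalStarSubalgebra ℂ C)
    [FiniteDimensional ℂ A] [FiniteDimensional ℂ B] :
    d0 (A : Set C) (B : Set C) =
      d0 (c0ValIn (Ω := Ω) (A : Set C)) (c0ValIn (Ω := Ω) (B : Set C)) := by
  let A' := A.toNonUnitalSubalgebra.toSubmodule.restrictScalars ℝ
  let B' := B.toNonUnitalSubalgebra.toSubmodule.restrictScalars ℝ
  have : FiniteDimensional ℝ A' := FiniteDimensional.complexToReal A
  have : FiniteDimensional ℝ B' := FiniteDimensional.complexToReal B
  refine (Real.sInf_eq_of_subset_of_forall_add_mem ⟨0, fun γ hγ ↦ hγ.1.le⟩ ?_ ?_).symm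
  · rintro γ ⟨hγ, hAB, hBA⟩
    exact ⟨hγ, nearIncl_of_nearIncl_c0ValIn (A := A') hAB,
      nearIncl_of_nearIncl_c0ValIn (A := B') hBA⟩
  · rintro γ ⟨hγ, hAB, hBA⟩ ε hε
    exact ⟨by positivity, nearIncl_c0ValIn_of_nearIncl (A := A') (B := B') hAB hε,
      nearIncl_c0ValIn_of_nearIncl (A := B') (B := A') hBA hε⟩

/-- For finite-dimensional `*`-subalgebras `𝒜, ℬ` of a C*-algebra `𝒞` and a nonempty locally
compact Hausdorff space `Ω`, `d₀(𝒜, ℬ) = d₀(C₀(Ω, 𝒜), C₀(Ω, ℬ))`. -/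
theorem d0_eq_d0_c0_of_finiteDimensional
    {C : Type*} [NonUnitalNormedRing C] [StarRing C] [CStarRing C] [NormedSpace ℂ C]
    [IsScalarTower ℂ C C] [SMulCommClass ℂ C C] [StarModule ℂ C] [CompleteSpace C]
    (Ω : Type*) [TopologicalSpace Ω] [LocallyCompactSpace Ω] [T2Space Ω] [Nonempty Ω]
    (A B : NonUnitalStarSubalgebra ℂ C)
    [FiniteDimensional ℂ A] [FiniteDimensional ℂ B] :
    d0 (A : Set C) (B : Set C) =
      d0 (c0ValIn (Ω := Ω) (A : Set C)) (c0ValIn (Ω := Ω) (B : Set C)) :=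
  d0_eq_d0_c0_of_finiteDimensional_general Ω A B
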